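/- arXiv:2206.10456 — 2 statements merged into one kernel-verified Lean document; each statement's English description precedes it below -/
import Mathlib

section
/- Let 𝔤 be a 4-dimensional real Lie algebra with basis (u, e₁, e₂, e₃) and bracket [e₁,e₂] = ε₃λ₃e₃, [e₂,e₃] = ε₁λ₁e₁, [e₃,e₁] = ε₂λ₂e₂, [u,e_i] = Σ_{j=1}^{3} a_{ij}e_j, and let B be the symmetric bilinear form with B(u,u) = ε₀, B(e_i,e_i) = ε_i, all other products of basis vectors zero, where ε₀ = ε₁ and ε₂ = ε₃ are signs. Let J₋ ∈ End(𝔤) be defined by J₋u = e₁, J₋e₁ = −u, J₋e₂ = e₃, J₋e₃ = −e₂, and let H = H₁₂₃ e₁*∧e₂*∧e₃* + Σ_{i<j} H_{ij} u*∧e_i*∧e_j* be an alternating 3-form with real coefficients. For x ∈ 𝔤 let H_x ∈ End(𝔤) be the endomorphism y ↦ (H(x,y,·))^♯, and let ∇ be the Levi-Civita product of (𝔤,B). Then (∇_x + (1/2)H_x) ∘ J₋ = J₋ ∘ (∇_x + (1/2)H_x) for all x ∈ 𝔤 if and only if: a₂₁ = a₃₁ = 0, a₂₃ + a₃₂ =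 0, a₂₂ − a₃₃ = ε₂(λ₃ − λ₂), H₂₃ = 0, H₁₂ = −ε₂a₁₂, H₁₃ = −ε₃a₁₃, and H₁₂₃ = 2ε₂a₂₂ − λ₁ + λ₂ − λ₃. -/
/-!
Write `K(x, y, z) = 2B(∇_x y + ½ H_x y, z)`, the Koszul formula twisted by `H`. Since `J₋` is
`B`-skew, `2B((D⁻_x J₋ - J₋ D⁻_x) y, z) = K(x, J₋y, z) + K(x, y, J₋z)`, so the condition is the
vanishing of this trilinear form. For fixed `x` it is alternating in `(y, z)` and changes sign
under `(y, z) ↦ (J₋y, J₋z)`; such forms make up a two-dimensional space, detected by the values at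
`(u, e₂)` and `(u, e₃)`. Letting `x` run through the basis leaves eight linear equations in the
structure constants, equivalent to the stated ones because `εᵢ² = 1`.
-/

namespace AlternatingMap

section CommSemiring

variable {R M N : Type*} [CommSemiring R] [AddCommMonoid M] [Module R M] [AddCommMonoid N]
  [Module R N] (f : M [⋀^Fin 3]→ₗ[R] N)

def curry₃ : M →ₗ[R] M →ₗ[R] M →ₗ[R] N :=
  LinearMap.mk₂ R
    (fun x y =>
      { toFun := fun z => f ![x, y, z]
        map_add' := fun z z' => by
          simpa using ((f.curryLeft x).curryLeft y).map_vecCons_add ![] z z'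
        map_smul' := fun c z => by
          simpa using ((f.curryLeft x).curryLeft y).map_vecCons_smul ![] c z })
    (fun x x' y => by ext z; exact f.map_vecCons_add ![y, z] x x')
    (fun c x y => by ext z; exact f.map_vecCons_smul ![y, z] c x)
    (fun x y y' => by ext z; exact (f.curryLeft x).map_vecCons_add ![z] y y')
    (fun c x y => by ext z; exact (f.curryLeft x).map_vecCons_smul ![z] c y)

@[simp]
theorem map_vec₃_eq_zero_left (x z : M) : f ![x, x, z] = 0 :=
  f.map_eq_zero_of_eq _ (i := 0) (j := 1) rfl (by decide)

@[simp]
theorem map_vec₃_eq_zero_right (x y : M) : f ![x, y, y] = 0 :=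
  f.map_eq_zero_of_eq _ (i := 1) (j := 2) rfl (by decide)

end CommSemiring

section CommRing

variable {R M N : Type*} [CommRing R] [AddCommGroup M] [Module R M] [AddCommGroup N]
  [Module R N] (f : M [⋀^Fin 3]→ₗ[R] N)

theorem map_vec₃_swap_left (x y z : M) : f ![y, x, z] = -f ![x, y, z] := by
  simpa using f.map_swap ![x, y, z] (show (0 : Fin 3) ≠ 1 by decide)

theorem map_vec₃_swap_right (x y z : M) : f ![x, z, y] = -f ![x, y, z] := by
  simpa using (f.curryLeft x).map_swap ![y, z] (show (0 : Fin 2) ≠ 1 by decide)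

end CommRing

end AlternatingMap

section Koszul

variable {R L : Type*} [CommRing R] [LieRing L] [LieAlgebra R L]

/-- `koszulForm B H x y z = 2B(∇_x y + ½ H_x y, z)`, with `∇` the Levi-Civita product of `B`. -/
def koszulForm (B : LinearMap.BilinForm R L) (H : L [⋀^Fin 3]→ₗ[R] R) :
    L →ₗ[R] L →ₗ[R] L →ₗ[R] R :=
  (LinearMap.mk₂ R
    (fun x y =>
      { toFun := fun z => B ⁅x, y⁆ z - B ⁅y, z⁆ x + B ⁅z, x⁆ y
        map_add' := fun z z' => by
          simp only [map_add, lie_add, add_lie, LinearMap.add_apply]; ring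
        map_smul' := fun c z => by
          simp only [map_smul, lie_smul, smul_lie, LinearMap.smul_apply, smul_eq_mul,
            RingHom.id_apply]
          ring })
    (fun x x' y => by ext z; simp only [map_add, add_lie, lie_add, LinearMap.add_apply,
      LinearMap.coe_mk, AddHom.coe_mk]; ring)
    (fun c x y => by ext z; simp only [map_smul, smul_lie, lie_smul, LinearMap.smul_apply,
      smul_eq_mul, LinearMap.coe_mk, AddHom.coe_mk]; ring)
    (fun x y y' => by ext z; simp only [map_add, lie_add, add_lie, LinearMap.add_apply,
      LinearMap.coe_mk, AddHom.coe_mk]; ring)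
    (fun c x y => by ext z; simp only [map_smul, lie_smul, smul_lie, LinearMap.smul_apply,
      smul_eq_mul, LinearMap.coe_mk, AddHom.coe_mk]; ring) : L →ₗ[R] L →ₗ[R] L →ₗ[R] R)
  + H.curry₃

variable (B : LinearMap.BilinForm R L) (H : L [⋀^Fin 3]→ₗ[R] R)

@[simp]
theorem koszulForm_apply (x y z : L) :
    koszulForm B H x y z = B ⁅x, y⁆ z - B ⁅y, z⁆ x + B ⁅z, x⁆ y + H ![x, y, z] := rfl

theorem koszulForm_swap (x y z : L) : koszulForm B H x z y = -koszulForm B H x y z := by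
  simp only [koszulForm_apply, H.map_vec₃_swap_right x y z]
  rw [← lie_skew x z, ← lie_skew z y, ← lie_skew y x]
  simp only [map_neg, LinearMap.neg_apply]
  ring

end Koszul

section Commutator

variable {R M : Type*} [CommRing R] [AddCommGroup M] [Module R M]

/-- If `K x y z = 2B(D_x y, z)` and `J` is `B`-skew, this is `2B((D_x J - J D_x) y, z)`. -/
def commutatorForm (K : M →ₗ[R] M →ₗ[R] M →ₗ[R] R) (J : M →ₗ[R] M) :
    M →ₗ[R] M →ₗ[R] M →ₗ[R] R :=
  K.compl₂ J + K.compr₂ (LinearMap.lcomp R R J)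

variable (K : M →ₗ[R] M →ₗ[R] M →ₗ[R] R) (J : M →ₗ[R] M)

@[simp]
theorem commutatorForm_apply (x y z : M) :
    commutatorForm K J x y z = K x (J y) z + K x y (J z) := rfl

theorem commutatorForm_isAlt (hK : ∀ x y z, K x z y = -K x y z) (x : M) :
    (commutatorForm K J x).IsAlt := fun y => by
  rw [commutatorForm_apply, hK]; ring

theorem commutatorForm_apply_map_map (hJ : ∀ v, J (J v) = -v) (x y z : M) :
    commutatorForm K J x (J y) (J z) = -commutatorForm K J x y z := by
  simp only [commutatorForm_apply, hJ, map_neg, LinearMap.neg_apply]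
  ring

end Commutator

section Adapted

variable {R M : Type*} [CommRing R] [AddCommGroup M] [Module R M]

def IsAdaptedComplexStructure (b : Module.Basis (Fin 4) R M) (J : M →ₗ[R] M) : Prop :=
  J (b 0) = b 1 ∧ J (b 1) = -b 0 ∧ J (b 2) = b 3 ∧ J (b 3) = -b 2

variable {b : Module.Basis (Fin 4) R M} {J : M →ₗ[R] M}

theorem IsAdaptedComplexStructure.apply_apply (hJ : IsAdaptedComplexStructure b J) (v : M) :
    J (J v) = -v := by
  obtain ⟨h0, h1, h2, h3⟩ := hJ
  have : J ∘ₗ J = -LinearMap.id :=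
    b.ext fun i => by fin_cases i <;> simp [h0, h1, h2, h3]
  exact LinearMap.congr_fun this v

theorem IsAdaptedComplexStructure.isSkewAdjoint {B : LinearMap.BilinForm R M}
    (hJ : IsAdaptedComplexStructure b J) (hortho : ∀ i j, i ≠ j → B (b i) (b j) = 0)
    (h01 : B (b 0) (b 0) = B (b 1) (b 1)) (h23 : B (b 2) (b 2) = B (b 3) (b 3)) :
    B.IsSkewAdjoint J := by
  obtain ⟨h0, h1, h2, h3⟩ := hJ
  have : B ∘ₗ J = B.compl₂ (-J) :=
    LinearMap.BilinForm.ext_basis b fun i j => by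
      fin_cases i <;> fin_cases j <;> simp [h0, h1, h2, h3, h01, h23, hortho]
  intro v w
  simpa using LinearMap.congr_fun₂ this v w

theorem IsAdaptedComplexStructure.bilinForm_eq_zero_iff [NoZeroDivisors R] [NeZero (2 : R)]
    (hJ : IsAdaptedComplexStructure b J) {ω : M →ₗ[R] M →ₗ[R] R} (hω : ω.IsAlt)
    (hωJ : ∀ y z, ω (J y) (J z) = -ω y z) :
    ω = 0 ↔ ω (b 0) (b 2) = 0 ∧ ω (b 0) (b 3) = 0 := by
  obtain ⟨h0, h1, h2, h3⟩ := hJ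
  refine ⟨fun h => by simp [h], fun ⟨h02, h03⟩ => ?_⟩
  have h01 : (2 : R) * ω (b 0) (b 1) = 0 := by
    have h := hωJ (b 0) (b 1)
    rw [h0, h1, map_neg] at h
    linear_combination h - hω.neg (b 0) (b 1)
  have h23 : (2 : R) * ω (b 2) (b 3) = 0 := by
    have h := hωJ (b 2) (b 3)
    rw [h2, h3, map_neg] at h
    linear_combination h - hω.neg (b 2) (b 3)
  have h12 : ω (b 1) (b 2) = 0 := by
    have h := hωJ (b 0) (b 3)
    rw [h0, h3, map_neg, h03] at h
    linear_combination -h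
  have h13 : ω (b 1) (b 3) = 0 := by
    have h := hωJ (b 0) (b 2)
    rw [h0, h2, h02] at h
    linear_combination h
  simp only [mul_eq_zero, two_ne_zero, false_or] at h01 h23
  refine LinearMap.ext_basis b b fun i j => ?_
  fin_cases i <;> fin_cases j <;> simp <;>
    first | exact hω.self_eq_zero _ | assumption | (rw [← hω.neg, neg_eq_zero]; assumption)

theorem IsAdaptedComplexStructure.commutatorForm_eq_zero_iff [NoZeroDivisors R] [NeZero (2 : R)]
    (hJ : IsAdaptedComplexStructure b J) {K : M →ₗ[R] M →ₗ[R] M →ₗ[R] R}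
    (hK : ∀ x y z, K x z y = -K x y z) :
    commutatorForm K J = 0 ↔
      ∀ i, commutatorForm K J (b i) (b 0) (b 2) = 0 ∧ commutatorForm K J (b i) (b 0) (b 3) = 0 := by
  simp only [← hJ.bilinForm_eq_zero_iff (commutatorForm_isAlt K J hK _)
    (commutatorForm_apply_map_map K J hJ.apply_apply _)]
  exact ⟨fun h i => by rw [h]; rfl, fun h => b.ext fun i => by simpa using h i⟩

end Adapted

section Connection

variable {𝕜 L : Type*} [Field 𝕜] [NeZero (2 : 𝕜)] [LieRing L] [LieAlgebra 𝕜 L]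
  {B : LinearMap.BilinForm 𝕜 L} {H : L [⋀^Fin 3]→ₗ[𝕜] 𝕜} {N Hs : L → L → L}

theorem two_mul_apply_eq_koszulForm
    (hN : ∀ x y z, 2 * B (N x y) z = B ⁅x, y⁆ z - B ⁅y, z⁆ x + B ⁅z, x⁆ y)
    (hHs : ∀ x y z, B (Hs x y) z = H ![x, y, z]) (x y z : L) :
    2 * B (N x y + (1 / 2 : 𝕜) • Hs x y) z = koszulForm B H x y z := by
  rw [map_add, map_smul, LinearMap.add_apply, LinearMap.smul_apply, smul_eq_mul, mul_add, hN,
    ← mul_assoc, mul_one_div_cancel two_ne_zero, one_mul, hHs, koszulForm_apply]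

theorem commutes_iff_commutatorForm_eq_zero (hB : B.SeparatingLeft) {J : L →ₗ[𝕜] L}
    (hJ : B.IsSkewAdjoint J)
    (hN : ∀ x y z, 2 * B (N x y) z = B ⁅x, y⁆ z - B ⁅y, z⁆ x + B ⁅z, x⁆ y)
    (hHs : ∀ x y z, B (Hs x y) z = H ![x, y, z]) :
    (∀ x y, N x (J y) + (1 / 2 : 𝕜) • Hs x (J y) = J (N x y + (1 / 2 : 𝕜) • Hs x y)) ↔
      commutatorForm (koszulForm B H) J = 0 := by
  have key : ∀ x y z, 2 * B (N x (J y) + (1 / 2 : 𝕜) • Hs x (J y)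
      - J (N x y + (1 / 2 : 𝕜) • Hs x y)) z = commutatorForm (koszulForm B H) J x y z := by
    intro x y z
    rw [commutatorForm_apply, ← two_mul_apply_eq_koszulForm hN hHs,
      ← two_mul_apply_eq_koszulForm hN hHs, map_sub, LinearMap.sub_apply, hJ, Pi.neg_apply,
      map_neg]
    ring
  constructor
  · intro h
    ext x y z
    rw [← key, h, sub_self]
    simp
  · intro h x y
    rw [← sub_eq_zero]
    refine hB _ fun z => ?_
    simpa [h, two_ne_zero] using key x y z

end Connection

/-- Here `(u, e₁, e₂, e₃) = (b 0, b 1, b 2, b 3)`, and the paper's indices are shifted by one: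
`εv i = ε_{i+1}`, `lam i = λ_{i+1}`, `aM i j = a_{(i+1)(j+1)}`, `Hc i j = H_{(i+1)(j+1)}`. -/
theorem stmt_16_general {𝔤 : Type*} [LieRing 𝔤] [LieAlgebra ℝ 𝔤]
    (b : Module.Basis (Fin 4) ℝ 𝔤)
    (ε₀ : ℝ) (εv lam : Fin 3 → ℝ) (aM : Fin 3 → Fin 3 → ℝ)
    (hεv : ∀ i, εv i = 1 ∨ εv i = -1)
    (hε01 : ε₀ = εv 0) (hε23 : εv 1 = εv 2)
    (B : LinearMap.BilinForm ℝ 𝔤)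
    (hB0 : B (b 0) (b 0) = ε₀)
    (hBi : ∀ i : Fin 3, B (b i.succ) (b i.succ) = εv i)
    (hortho : ∀ i j : Fin 4, i ≠ j → B (b i) (b j) = 0)
    (hb12 : ⁅b 1, b 2⁆ = (εv 2 * lam 2) • b 3)
    (hb23 : ⁅b 2, b 3⁆ = (εv 0 * lam 0) • b 1)
    (hb31 : ⁅b 3, b 1⁆ = (εv 1 * lam 1) • b 2)
    (hbu : ∀ i : Fin 3, ⁅b 0, b i.succ⁆ = ∑ j : Fin 3, aM i j • b j.succ)
    (Jm : 𝔤 →ₗ[ℝ] 𝔤)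
    (hJmu : Jm (b 0) = b 1) (hJme1 : Jm (b 1) = -b 0)
    (hJme2 : Jm (b 2) = b 3) (hJme3 : Jm (b 3) = -b 2)
    (H : AlternatingMap ℝ 𝔤 ℝ (Fin 3))
    (H123 : ℝ) (Hc : Fin 3 → Fin 3 → ℝ)
    (hH123 : H ![b 1, b 2, b 3] = H123)
    (hHc : ∀ i j : Fin 3, H ![b 0, b i.succ, b j.succ] = Hc i j)
    (Hs : 𝔤 → 𝔤 → 𝔤) (hHs : ∀ x y z, B (Hs x y) z = H ![x, y, z])
    (N : 𝔤 → 𝔤 → 𝔤)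
    (hK : ∀ x y z, 2 * B (N x y) z = B ⁅x, y⁆ z - B ⁅y, z⁆ x + B ⁅z, x⁆ y) :
    (∀ x y : 𝔤, N x (Jm y) + (1 / 2 : ℝ) • Hs x (Jm y)
        = Jm (N x y + (1 / 2 : ℝ) • Hs x y)) ↔
    (aM 1 0 = 0 ∧ aM 2 0 = 0 ∧ aM 1 2 + aM 2 1 = 0 ∧
     aM 1 1 - aM 2 2 = εv 1 * (lam 2 - lam 1) ∧
     Hc 1 2 = 0 ∧ Hc 0 1 = -(εv 1) * aM 0 1 ∧ Hc 0 2 = -(εv 2) * aM 0 2 ∧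
     H123 = 2 * εv 1 * aM 1 1 - lam 0 + lam 1 - lam 2) := by
  have hJ : IsAdaptedComplexStructure b Jm := ⟨hJmu, hJme1, hJme2, hJme3⟩
  have hBb : ∀ i j, B (b i) (b j) = if i = j then ![εv 0, εv 0, εv 1, εv 1] i else 0 := by
    intro i j
    split_ifs with hij
    · subst hij
      fin_cases i
      exacts [hB0.trans hε01, hBi 0, hBi 1, (hBi 2).trans hε23.symm]
    · exact hortho i j hij
  have hB : B.SeparatingLeft :=
    ((LinearMap.BilinForm.iIsOrtho.nondegenerate_iff_not_isOrtho_basis_self B b hortho).2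
      fun i => by fin_cases i <;> rcases hεv 0 with h | h <;> rcases hεv 1 with h' | h' <;>
        simp [hBb, h, h']).1
  rw [commutes_iff_commutatorForm_eq_zero hB
      (hJ.isSkewAdjoint hortho (by simp [hBb]) (by simp [hBb])) hK hHs,
    hJ.commutatorForm_eq_zero_iff (koszulForm_swap B H)]
  simp only [Fin.forall_fin_succ, Fin.sum_univ_three, Fin.reduceSucc, IsEmpty.forall_iff, and_true]
    at hbu
  have hH012 : H ![b 0, b 1, b 2] = Hc 0 1 := hHc 0 1
  have hH013 : H ![b 0, b 1, b 3] = Hc 0 2 := hHc 0 2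
  have hH023 : H ![b 0, b 2, b 3] = Hc 1 2 := hHc 1 2
  simp only [Fin.forall_fin_succ, commutatorForm_apply, hJmu, hJme2, hJme3, map_neg]
  simp [hbu, hb12, hb23, hb31, hBb, hH012, hH013, hH023, hH123,
    ← lie_skew (b 1) (b 0), ← lie_skew (b 2) (b 0), ← lie_skew (b 3) (b 0),
    ← lie_skew (b 2) (b 1), ← lie_skew (b 3) (b 2), ← lie_skew (b 1) (b 3),
    H.map_vec₃_swap_left (b 0) (b 1), H.map_vec₃_swap_left (b 0) (b 2),
    H.map_vec₃_swap_left (b 0) (b 3), H.map_vec₃_swap_left (b 1) (b 2),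
    H.map_vec₃_swap_left (b 1) (b 3), H.map_vec₃_swap_right (b 0) (b 2) (b 3),
    H.map_vec₃_swap_right (b 1) (b 2) (b 3)]
  rw [← hε23]
  simp only [and_assoc]
  rcases hεv 0 with hp | hp <;> rcases hεv 1 with hq | hq <;> simp only [hp, hq] <;>
    constructor <;> rintro ⟨h₁, h₂, h₃, h₄, h₅, h₆, h₇, h₈⟩ <;>
    refine ⟨?_, ?_, ?_, ?_, ?_, ?_, ?_, ?_⟩ <;> linarith

/-- Lemma 6.11 (equations (cond-coeff)): the connection `D⁻ = ∇ + (1/2)H` preserves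
`J₋` iff the displayed coefficient equations hold.  Here
`(u,e₁,e₂,e₃) = (b 0, b 1, b 2, b 3)` is a `B`-orthonormal basis with `ε₀ = ε₁`,
`ε₂ = ε₃`, `J₋u = e₁`, `J₋e₁ = −u`, `J₋e₂ = e₃`, `J₋e₃ = −e₂`, `aM i j` is the
paper's `a_{(i+1)(j+1)}`, `H` is the 3-form with coefficients `H123`, `Hc i j`
(`H_{(i+1)(j+1)}`), and `Hs x y` is the `B`-dual vector of `H(x,y,·)`. -/
theorem stmt_16 {𝔤 : Type*} [LieRing 𝔤] [LieAlgebra ℝ 𝔤]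
    (b : Module.Basis (Fin 4) ℝ 𝔤)
    (ε₀ : ℝ) (εv lam : Fin 3 → ℝ) (aM : Fin 3 → Fin 3 → ℝ)
    (hε₀ : ε₀ = 1 ∨ ε₀ = -1) (hεv : ∀ i, εv i = 1 ∨ εv i = -1)
    (hε01 : ε₀ = εv 0) (hε23 : εv 1 = εv 2)
    (B : LinearMap.BilinForm ℝ 𝔤)
    (hBsymm : ∀ x y, B x y = B y x)
    (hB0 : B (b 0) (b 0) = ε₀)
    (hBi : ∀ i : Fin 3, B (b i.succ) (b i.succ) = εv i)
    (hortho : ∀ i j : Fin 4, i ≠ j → B (b i) (b j) = 0)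
    (hb12 : ⁅b 1, b 2⁆ = (εv 2 * lam 2) • b 3)
    (hb23 : ⁅b 2, b 3⁆ = (εv 0 * lam 0) • b 1)
    (hb31 : ⁅b 3, b 1⁆ = (εv 1 * lam 1) • b 2)
    (hbu : ∀ i : Fin 3, ⁅b 0, b i.succ⁆ = ∑ j : Fin 3, aM i j • b j.succ)
    (Jm : 𝔤 →ₗ[ℝ] 𝔤)
    (hJmu : Jm (b 0) = b 1) (hJme1 : Jm (b 1) = -b 0)
    (hJme2 : Jm (b 2) = b 3) (hJme3 : Jm (b 3) = -b 2)
    (H : AlternatingMap ℝ 𝔤 ℝ (Fin 3))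
    (H123 : ℝ) (Hc : Fin 3 → Fin 3 → ℝ)
    (hHc_anti : ∀ i j, Hc i j = -Hc j i)
    (hH123 : H ![b 1, b 2, b 3] = H123)
    (hHc : ∀ i j : Fin 3, H ![b 0, b i.succ, b j.succ] = Hc i j)
    (Hs : 𝔤 → 𝔤 → 𝔤) (hHs : ∀ x y z, B (Hs x y) z = H ![x, y, z])
    (N : 𝔤 → 𝔤 → 𝔤)
    (hK : ∀ x y z, 2 * B (N x y) z = B ⁅x, y⁆ z - B ⁅y, z⁆ x + B ⁅z, x⁆ y) :
    (∀ x y : 𝔤, N x (Jm y) + (1 / 2 : ℝ) • Hs x (Jm y)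
        = Jm (N x y + (1 / 2 : ℝ) • Hs x y)) ↔
    (aM 1 0 = 0 ∧ aM 2 0 = 0 ∧ aM 1 2 + aM 2 1 = 0 ∧
     aM 1 1 - aM 2 2 = εv 1 * (lam 2 - lam 1) ∧
     Hc 1 2 = 0 ∧ Hc 0 1 = -(εv 1) * aM 0 1 ∧ Hc 0 2 = -(εv 2) * aM 0 2 ∧
     H123 = 2 * εv 1 * aM 1 1 - lam 0 + lam 1 - lam 2) :=
  stmt_16_general b ε₀ εv lam aM hεv hε01 hε23 B hB0 hBi hortho hb12 hb23 hb31 hbu Jm hJmu hJme1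
    hJme2 hJme3 H H123 Hc hH123 hHc Hs hHs N hK
end

section
/- Let 𝔤 be a 4-dimensional real Lie algebra with basis (u, e₁, e₂, e₃) and bracket [e₁,e₂] = ε₃λ₃e₃, [e₂,e₃] = ε₁λ₁e₁, [e₃,e₁] = ε₂λ₂e₂, [u,e_i] = Σ_{j=1}^{3} a_{ij}e_j, and let B be the symmetric bilinear form with B(u,u) = ε₀, B(e_i,e_i) = ε_i, all other products of basis vectors zero, where ε₀ = ε₁ and ε₂ = ε₃ are signs. Assume a₂₁ = a₃₁ = 0 and a₂₃ + a₃₂ = 0. Let H = H₁₂₃ e₁*∧e₂*∧e₃* + Σ_{i<j} H_{ij} u*∧e_i*∧e_j* be an alternating 3-form with H₂₃ = 0, H₁₂ = −ε₂a₁₂, H₁₃ = −ε₃a₁₃. Let J₋ ∈ End(𝔤) be defined by J₋u = e₁, J₋e₁ = −u, J₋e₂ = e₃, J₋e₃ = −e₂. Let c₊ ∈ ℝ \ {0}, X₊ = au + be₁ + ce₂ + de₃, and define the 2-form F := (1/(2c₊))(d(X₊^♭) + ι_{X₊}H), where X₊^♭ = B(X₊,·), d is the Chevalley–Eilenberg differential,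 and ι denotes interior multiplication. Then F(J₋x, J₋y) = F(x,y) for all x, y ∈ 𝔤 if and only if: ε₂ a a₁₂ − d(H₁₂₃ − λ₃) = ε₂(c a₂₃ − d a₃₃ + b a₁₃) and ε₃ a a₁₃ + c(H₁₂₃ − λ₂) = ε₂(c a₂₂ + d a₂₃ − b a₁₂). -/
/-!
`F` is a nonzero multiple of the alternating form `G = d(X₊^♭) + ι_{X₊}H`. Since `J₋` rotates each
of the planes `⟨u, e₁⟩` and `⟨e₂, e₃⟩` by a right angle, an alternating form `G` is
`J₋`-invariant exactly when `G(e₁, e₃) = G(u, e₂)` and `G(e₁, e₂) = -G(u, e₃)`; the other basis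
pairs are invariant automatically. In the orthonormal basis these four values are explicit in the
structure constants, the coefficients of `H` and the coordinates of `X₊`, and the two conditions
become the two coefficient equations.
-/

namespace LinearMap.BilinForm

variable {R M : Type*} [CommRing R] [AddCommGroup M] [Module R M]

theorem compl₁₂_eq_self_iff_of_isAlt (b : Module.Basis (Fin 4) R M) {F : LinearMap.BilinForm R M}
    (hF : F.IsAlt) {J : M →ₗ[R] M} (hJ0 : J (b 0) = b 1) (hJ1 : J (b 1) = -b 0)
    (hJ2 : J (b 2) = b 3) (hJ3 : J (b 3) = -b 2) :
    F.compl₁₂ J J = F ↔ F (b 1) (b 3) = F (b 0) (b 2) ∧ F (b 1) (b 2) = -F (b 0) (b 3) := by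
  constructor
  · intro h
    have h02 := LinearMap.congr_fun₂ h (b 0) (b 2)
    have h03 := LinearMap.congr_fun₂ h (b 0) (b 3)
    simp only [compl₁₂_apply, hJ0, hJ2, hJ3, map_neg] at h02 h03
    exact ⟨h02, by rw [← h03, neg_neg]⟩
  · rintro ⟨h13, h12⟩
    refine ext_basis b fun i j => ?_
    have skew (i j : Fin 4) : F (b j) (b i) = -F (b i) (b j) := (hF.neg_eq _ _).symm
    fin_cases i <;> fin_cases j <;>
      simp [hJ0, hJ1, hJ2, hJ3, hF.self_eq_zero, h13, h12,
        skew 0 1, skew 0 2, skew 0 3, skew 1 2, skew 1 3, skew 2 3]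

end LinearMap.BilinForm

namespace LieAlgebra

variable {R L : Type*} [CommRing R] [LieRing L] [LieAlgebra R L]

def chevalleyEilenbergD (α : Module.Dual R L) : LinearMap.BilinForm R L :=
  -(LieAlgebra.ad R L : L →ₗ[R] Module.End R L).compr₂ α

@[simp]
theorem chevalleyEilenbergD_apply (α : Module.Dual R L) (x y : L) :
    chevalleyEilenbergD α x y = -α ⁅x, y⁆ :=
  rfl

theorem isAlt_chevalleyEilenbergD (α : Module.Dual R L) : (chevalleyEilenbergD α).IsAlt := by
  intro x
  simp

end LieAlgebra

namespace AlternatingMap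

variable {R M : Type*} [CommSemiring R] [AddCommMonoid M] [Module R M]

section

variable {N : Type*} [AddCommMonoid N] [Module R N] (H : M [⋀^Fin 3]→ₗ[R] N)

theorem map_self₀₁ (x z : M) : H ![x, x, z] = 0 :=
  H.map_eq_zero_of_eq _ (i := 0) (j := 1) rfl (by decide)

theorem map_self₀₂ (x y : M) : H ![x, y, x] = 0 :=
  H.map_eq_zero_of_eq _ (i := 0) (j := 2) rfl (by decide)

theorem map_self₁₂ (x y : M) : H ![x, y, y] = 0 :=
  H.map_eq_zero_of_eq _ (i := 1) (j := 2) rfl (by decide)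

end

section

variable {N : Type*} [AddCommGroup N] [Module R N] (H : M [⋀^Fin 3]→ₗ[R] N)

theorem map_swap₀₁ (x y z : M) : H ![y, x, z] = -H ![x, y, z] := by
  convert H.map_swap ![x, y, z] (i := 0) (j := 1) (by decide) using 2
  ext i
  fin_cases i <;> rfl

theorem map_swap₁₂ (x y z : M) : H ![x, z, y] = -H ![x, y, z] := by
  convert H.map_swap ![x, y, z] (i := 1) (j := 2) (by decide) using 2
  ext i
  fin_cases i <;> rfl

end

protected def interior (H : M [⋀^Fin 3]→ₗ[R] R) (X : M) : LinearMap.BilinForm R M :=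
  LinearMap.mk₂ R (fun x y => H ![X, x, y])
    (fun x x' y => (H.curryLeft X).map_vecCons_add ![y] x x')
    (fun r x y => (H.curryLeft X).map_vecCons_smul ![y] r x)
    (fun x y y' => ((H.curryLeft X).curryLeft x).map_vecCons_add ![] y y')
    (fun r x y => ((H.curryLeft X).curryLeft x).map_vecCons_smul ![] r y)

@[simp]
theorem interior_apply (H : M [⋀^Fin 3]→ₗ[R] R) (X x y : M) :
    H.interior X x y = H ![X, x, y] :=
  rfl

theorem isAlt_interior (H : M [⋀^Fin 3]→ₗ[R] R) (X : M) : (H.interior X).IsAlt :=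
  H.map_self₁₂ X

end AlternatingMap

section CoordinateFormulas

open LieAlgebra AlternatingMap

variable {R L : Type*} [CommRing R] [LieRing L] [LieAlgebra R L]
  {B : LinearMap.BilinForm R L} {H : L [⋀^Fin 3]→ₗ[R] R} {e : Fin 4 → L} {X : L} {α β γ δ : R}

theorem chevalleyEilenbergD_add_interior_apply_zero_two
    (hortho : ∀ i j, i ≠ j → B (e i) (e j) = 0) (hX : X = α • e 0 + β • e 1 + γ • e 2 + δ • e 3)
    {p q r : R} (hbr : ⁅e 0, e 2⁆ = p • e 1 + q • e 2 + r • e 3) :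
    (chevalleyEilenbergD (B X) + H.interior X) (e 0) (e 2) =
      -(p * β * B (e 1) (e 1) + q * γ * B (e 2) (e 2) + r * δ * B (e 3) (e 3))
        - β * H ![e 0, e 1, e 2] + δ * H ![e 0, e 2, e 3] := by
  simp only [hX, hbr, LinearMap.add_apply, chevalleyEilenbergD_apply, interior_apply, map_add,
    map_smul, LinearMap.smul_apply, map_vecCons_add, map_vecCons_smul, smul_eq_mul, ne_eq,
    Fin.reduceEq, not_false_eq_true, hortho, map_self₀₁, map_self₀₂,
    H.map_swap₀₁ (e 0) (e 1), H.map_swap₀₁ (e 0) (e 3), H.map_swap₁₂ (e 0) (e 2) (e 3)]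
  ring

theorem chevalleyEilenbergD_add_interior_apply_zero_three
    (hortho : ∀ i j, i ≠ j → B (e i) (e j) = 0) (hX : X = α • e 0 + β • e 1 + γ • e 2 + δ • e 3)
    {p q r : R} (hbr : ⁅e 0, e 3⁆ = p • e 1 + q • e 2 + r • e 3) :
    (chevalleyEilenbergD (B X) + H.interior X) (e 0) (e 3) =
      -(p * β * B (e 1) (e 1) + q * γ * B (e 2) (e 2) + r * δ * B (e 3) (e 3))
        - β * H ![e 0, e 1, e 3] - γ * H ![e 0, e 2, e 3] := by
  simp only [hX, hbr, LinearMap.add_apply, chevalleyEilenbergD_apply, interior_apply, map_add,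
    map_smul, LinearMap.smul_apply, map_vecCons_add, map_vecCons_smul, smul_eq_mul, ne_eq,
    Fin.reduceEq, not_false_eq_true, hortho, map_self₀₁, map_self₀₂,
    H.map_swap₀₁ (e 0) (e 1), H.map_swap₀₁ (e 0) (e 2)]
  ring

theorem chevalleyEilenbergD_add_interior_apply_one_three
    (hortho : ∀ i j, i ≠ j → B (e i) (e j) = 0) (hX : X = α • e 0 + β • e 1 + γ • e 2 + δ • e 3)
    {s : R} (hbr : ⁅e 3, e 1⁆ = s • e 2) :
    (chevalleyEilenbergD (B X) + H.interior X) (e 1) (e 3) =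
      s * γ * B (e 2) (e 2) + α * H ![e 0, e 1, e 3] - γ * H ![e 1, e 2, e 3] := by
  have hbr' : ⁅e 1, e 3⁆ = -(s • e 2) := by rw [← lie_skew, hbr]
  simp only [hX, hbr', LinearMap.add_apply, chevalleyEilenbergD_apply, interior_apply, map_add,
    map_smul, map_neg, LinearMap.smul_apply, map_vecCons_add, map_vecCons_smul, smul_eq_mul, ne_eq,
    Fin.reduceEq, not_false_eq_true, hortho, map_self₀₁, map_self₀₂,
    H.map_swap₀₁ (e 1) (e 2)]
  ring

theorem chevalleyEilenbergD_add_interior_apply_one_two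
    (hortho : ∀ i j, i ≠ j → B (e i) (e j) = 0) (hX : X = α • e 0 + β • e 1 + γ • e 2 + δ • e 3)
    {s : R} (hbr : ⁅e 1, e 2⁆ = s • e 3) :
    (chevalleyEilenbergD (B X) + H.interior X) (e 1) (e 2) =
      -(s * δ * B (e 3) (e 3)) + α * H ![e 0, e 1, e 2] + δ * H ![e 1, e 2, e 3] := by
  simp only [hX, hbr, LinearMap.add_apply, chevalleyEilenbergD_apply, interior_apply, map_add,
    map_smul, LinearMap.smul_apply, map_vecCons_add, map_vecCons_smul, smul_eq_mul, ne_eq,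
    Fin.reduceEq, not_false_eq_true, hortho, map_self₀₁, map_self₀₂,
    H.map_swap₀₁ (e 1) (e 3), H.map_swap₁₂ (e 1) (e 2) (e 3)]
  ring

end CoordinateFormulas

/-- `(b 0, b 1, b 2, b 3)` is the paper's basis `(u, e₁, e₂, e₃)` and `(a', b', c', d')` are the
coordinates `(a, b, c, d)` of `X₊ = Xp`; the indices of `εv`, `lam`, `aM` and `Hc` are shifted
down by one from the paper's (`aM i j = a_{(i+1)(j+1)}`). -/
theorem stmt_17_general {𝔤 : Type*} [LieRing 𝔤] [LieAlgebra ℝ 𝔤]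
    (b : Module.Basis (Fin 4) ℝ 𝔤)
    (εv lam : Fin 3 → ℝ) (aM : Fin 3 → Fin 3 → ℝ)
    (hεv : ∀ i, εv i = 1 ∨ εv i = -1)
    (hε23 : εv 1 = εv 2)
    (B : LinearMap.BilinForm ℝ 𝔤)
    (hBi : ∀ i : Fin 3, B (b i.succ) (b i.succ) = εv i)
    (hortho : ∀ i j : Fin 4, i ≠ j → B (b i) (b j) = 0)
    (hb12 : ⁅b 1, b 2⁆ = (εv 2 * lam 2) • b 3)
    (hb31 : ⁅b 3, b 1⁆ = (εv 1 * lam 1) • b 2)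
    (hbu : ∀ i : Fin 3, ⁅b 0, b i.succ⁆ = ∑ j : Fin 3, aM i j • b j.succ)
    (ha21 : aM 1 0 = 0) (ha31 : aM 2 0 = 0) (ha23 : aM 1 2 + aM 2 1 = 0)
    (H : AlternatingMap ℝ 𝔤 ℝ (Fin 3))
    (H123 : ℝ) (Hc : Fin 3 → Fin 3 → ℝ)
    (hH123 : H ![b 1, b 2, b 3] = H123)
    (hHc : ∀ i j : Fin 3, H ![b 0, b i.succ, b j.succ] = Hc i j)
    (hH23 : Hc 1 2 = 0)
    (hH12 : Hc 0 1 = -(εv 1) * aM 0 1)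
    (hH13 : Hc 0 2 = -(εv 2) * aM 0 2)
    (Jm : 𝔤 →ₗ[ℝ] 𝔤)
    (hJmu : Jm (b 0) = b 1) (hJme1 : Jm (b 1) = -b 0)
    (hJme2 : Jm (b 2) = b 3) (hJme3 : Jm (b 3) = -b 2)
    (c : ℝ) (hc : c ≠ 0)
    (a' b' c' d' : ℝ) (Xp : 𝔤)
    (hXp : Xp = a' • b 0 + b' • b 1 + c' • b 2 + d' • b 3)
    (Fn : 𝔤 → 𝔤 → ℝ)
    (hFn : ∀ x y : 𝔤, Fn x y = (1 / (2 * c)) * (-(B Xp ⁅x, y⁆) + H ![Xp, x, y])) :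
    (∀ x y : 𝔤, Fn (Jm x) (Jm y) = Fn x y) ↔
    (εv 1 * a' * aM 0 1 - d' * (H123 - lam 2)
        = εv 1 * (c' * aM 1 2 - d' * aM 2 2 + b' * aM 0 2) ∧
     εv 2 * a' * aM 0 2 + c' * (H123 - lam 1)
        = εv 1 * (c' * aM 1 1 + d' * aM 1 2 - b' * aM 0 1)) := by
  set G := LieAlgebra.chevalleyEilenbergD (B Xp) + H.interior Xp
  have hFG : (∀ x y, Fn (Jm x) (Jm y) = Fn x y) ↔ G.compl₁₂ Jm Jm = G := by
    have hFn' (x y : 𝔤) : Fn x y = 1 / (2 * c) * G x y := hFn x y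
    simp only [hFn', mul_right_inj' (one_div_ne_zero (mul_ne_zero two_ne_zero hc)),
      LinearMap.ext_iff₂, LinearMap.compl₁₂_apply]
  have hG : G.IsAlt := (LieAlgebra.isAlt_chevalleyEilenbergD _).add (H.isAlt_interior Xp)
  have hbr02 : ⁅b 0, b 2⁆ = aM 1 0 • b 1 + aM 1 1 • b 2 + aM 1 2 • b 3 := by
    simpa [Fin.sum_univ_three] using hbu 1
  have hbr03 : ⁅b 0, b 3⁆ = aM 2 0 • b 1 + aM 2 1 • b 2 + aM 2 2 • b 3 := by
    simpa [Fin.sum_univ_three] using hbu 2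
  obtain ⟨hB1, hB2, hB3⟩ : B (b 1) (b 1) = εv 0 ∧ B (b 2) (b 2) = εv 1 ∧ B (b 3) (b 3) = εv 2 :=
    ⟨hBi 0, hBi 1, hBi 2⟩
  obtain ⟨hH012, hH013, hH023⟩ : H ![b 0, b 1, b 2] = Hc 0 1 ∧ H ![b 0, b 1, b 3] = Hc 0 2 ∧
      H ![b 0, b 2, b 3] = Hc 1 2 :=
    ⟨hHc 0 1, hHc 0 2, hHc 1 2⟩
  have hε1 : εv 1 * εv 1 = 1 := by rcases hεv 1 with h | h <;> simp [h]
  rw [hFG, LinearMap.BilinForm.compl₁₂_eq_self_iff_of_isAlt b hG hJmu hJme1 hJme2 hJme3,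
    chevalleyEilenbergD_add_interior_apply_zero_two hortho hXp hbr02,
    chevalleyEilenbergD_add_interior_apply_zero_three hortho hXp hbr03,
    chevalleyEilenbergD_add_interior_apply_one_three hortho hXp hb31,
    chevalleyEilenbergD_add_interior_apply_one_two hortho hXp hb12,
    hB1, hB2, hB3, hH012, hH013, hH023, hH123, hH23, hH12, hH13, ha21, ha31, ← hε23, and_comm]
  refine and_congr ⟨fun h => ?_, fun h => ?_⟩ ⟨fun h => ?_, fun h => ?_⟩
  · linear_combination -h - d' * lam 2 * hε1 - εv 1 * c' * ha23
  · linear_combination -h - d' * lam 2 * hε1 - εv 1 * c' * ha23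
  · linear_combination -h + c' * lam 1 * hε1
  · linear_combination -h + c' * lam 1 * hε1

/-- The (1,1)-type lemma of Section 6.3 (equations (F-11-concrete)): with
`F := (1/(2c₊))(d(X₊^♭) + ι_{X₊}H)`, i.e.
`F(x,y) = (1/(2c₊))(−B(X₊,[x,y]) + H(X₊,x,y))`, the form `F` is of type `(1,1)` with
respect to `J₋` (i.e. `F(J₋x,J₋y) = F(x,y)`) iff the two displayed coefficient
equations hold.  Here `(u,e₁,e₂,e₃) = (b 0, b 1, b 2, b 3)` is a `B`-orthonormal
basis with `ε₀ = ε₁`, `ε₂ = ε₃`, `aM i j` is the paper's `a_{(i+1)(j+1)}`, and `H`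
is the 3-form with coefficients `H123`, `Hc i j` satisfying `H₂₃ = 0`,
`H₁₂ = −ε₂a₁₂`, `H₁₃ = −ε₃a₁₃`. -/
theorem stmt_17 {𝔤 : Type*} [LieRing 𝔤] [LieAlgebra ℝ 𝔤]
    (b : Module.Basis (Fin 4) ℝ 𝔤)
    (ε₀ : ℝ) (εv lam : Fin 3 → ℝ) (aM : Fin 3 → Fin 3 → ℝ)
    (hε₀ : ε₀ = 1 ∨ ε₀ = -1) (hεv : ∀ i, εv i = 1 ∨ εv i = -1)
    (hε01 : ε₀ = εv 0) (hε23 : εv 1 = εv 2)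
    (B : LinearMap.BilinForm ℝ 𝔤)
    (hBsymm : ∀ x y, B x y = B y x)
    (hB0 : B (b 0) (b 0) = ε₀)
    (hBi : ∀ i : Fin 3, B (b i.succ) (b i.succ) = εv i)
    (hortho : ∀ i j : Fin 4, i ≠ j → B (b i) (b j) = 0)
    (hb12 : ⁅b 1, b 2⁆ = (εv 2 * lam 2) • b 3)
    (hb23 : ⁅b 2, b 3⁆ = (εv 0 * lam 0) • b 1)
    (hb31 : ⁅b 3, b 1⁆ = (εv 1 * lam 1) • b 2)
    (hbu : ∀ i : Fin 3, ⁅b 0, b i.succ⁆ = ∑ j : Fin 3, aM i j • b j.succ)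
    (ha21 : aM 1 0 = 0) (ha31 : aM 2 0 = 0) (ha23 : aM 1 2 + aM 2 1 = 0)
    (H : AlternatingMap ℝ 𝔤 ℝ (Fin 3))
    (H123 : ℝ) (Hc : Fin 3 → Fin 3 → ℝ)
    (hHc_anti : ∀ i j, Hc i j = -Hc j i)
    (hH123 : H ![b 1, b 2, b 3] = H123)
    (hHc : ∀ i j : Fin 3, H ![b 0, b i.succ, b j.succ] = Hc i j)
    (hH23 : Hc 1 2 = 0)
    (hH12 : Hc 0 1 = -(εv 1) * aM 0 1)
    (hH13 : Hc 0 2 = -(εv 2) * aM 0 2)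
    (Jm : 𝔤 →ₗ[ℝ] 𝔤)
    (hJmu : Jm (b 0) = b 1) (hJme1 : Jm (b 1) = -b 0)
    (hJme2 : Jm (b 2) = b 3) (hJme3 : Jm (b 3) = -b 2)
    (c : ℝ) (hc : c ≠ 0)
    (a' b' c' d' : ℝ) (Xp : 𝔤)
    (hXp : Xp = a' • b 0 + b' • b 1 + c' • b 2 + d' • b 3)
    (Fn : 𝔤 → 𝔤 → ℝ)
    (hFn : ∀ x y : 𝔤, Fn x y = (1 / (2 * c)) * (-(B Xp ⁅x, y⁆) + H ![Xp, x, y])) :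
    (∀ x y : 𝔤, Fn (Jm x) (Jm y) = Fn x y) ↔
    (εv 1 * a' * aM 0 1 - d' * (H123 - lam 2)
        = εv 1 * (c' * aM 1 2 - d' * aM 2 2 + b' * aM 0 2) ∧
     εv 2 * a' * aM 0 2 + c' * (H123 - lam 1)
        = εv 1 * (c' * aM 1 1 + d' * aM 1 2 - b' * aM 0 1)) :=
  stmt_17_general b εv lam aM hεv hε23 B hBi hortho hb12 hb31 hbu ha21 ha31 ha23 H H123 Hc hH123 hHc
    hH23 hH12 hH13 Jm hJmu hJme1 hJme2 hJme3 c hc a' b' c' d' Xp hXp Fn hFn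
end
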